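/- The set of relaxed ancestral X-clusters of G forms a weak hierarchy: if A, B, C are relaxed ancestral X-clusters then A ∩ B ∩ C ∈ {A ∩ B, B ∩ C, A ∩ C}. -/
import Mathlib


open Relation

variable {V : Type*}

/-- `u ⪯ v` : the reflexive–transitive closure of the arc relation `E`. -/
def preceq (E : V → V → Prop) : V → V → Prop := Relation.ReflTransGen E

/-- `u ≺ v` : `u ⪯ v` and `u ≠ v`. -/
def precLT (E : V → V → Prop) (u v : V) : Prop := preceq E u v ∧ u ≠ v

/-- the set of common ancestors of `a` and `b`. -/
def ca (E : V → V → Prop) (a b : V) : Set V := {v | preceq E v a ∧ preceq E v b}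

/-- the set of most recent common ancestors of `a` and `b`:
the maximal elements of `ca E a b` with respect to `⪯`. -/
def mrca (E : V → V → Prop) (a b : V) : Set V :=
  {v | v ∈ ca E a b ∧ ∀ w ∈ ca E a b, preceq E v w → v = w}

/-- the set of descendants of `v` lying in `X`. -/
def desc (E : V → V → Prop) (X : Set V) (v : V) : Set V := {x | x ∈ X ∧ preceq E v x}

/-- `D(=C)` : the vertices whose set of descendants in `X` is exactly `C`. -/
def Deq (E : V → V → Prop) (X C : Set V) : Set V := {v | desc E X v = C}

/-- `D(⊆C)` : the vertices all of whose descendants in `X` lie in `C`. -/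
def Dsub (E : V → V → Prop) (X C : Set V) : Set V := {v | desc E X v ⊆ C}

/-- `S` separates `A` from `B`: every path in the underlying undirected graph of
`E` from an element of `A` to an element of `B` passes through some element of `S`. -/
def Separates (E : V → V → Prop) (S A B : Set V) : Prop :=
  ∀ x ∈ A, ∀ y ∈ B, x ∉ S →
    ¬ Relation.ReflTransGen (fun u v => (E u v ∨ E v u) ∧ v ∉ S) x y

/-- `C` is a tight `X`-cluster: it is a nonempty subset of `X` such that
`D(=C)` separates `C` from `X − C`. -/
def TightCluster (E : V → V → Prop) (X C : Set V) : Prop :=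
  C.Nonempty ∧ C ⊆ X ∧ Separates E (Deq E X C) C (X \ C)

/-- adjacency in the cousinship graph `Γ(C)`. -/
def cousinAdj (E : V → V → Prop) (X C : Set V) (x y : V) : Prop :=
  x ≠ y ∧ x ∈ C ∧ y ∈ C ∧
    ∃ v ∈ Dsub E X C, x ∈ desc E X v ∧ y ∈ desc E X v

/-- `C` is a strict `X`-cluster. -/
def StrictCluster (E : V → V → Prop) (X C : Set V) : Prop :=
  C ⊆ X ∧
  (∀ v : V, (C ∩ desc E X v).Nonempty → C ⊆ desc E X v ∨ desc E X v ⊆ C) ∧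
  (∀ x ∈ C, ∀ y ∈ C, Relation.ReflTransGen (cousinAdj E X C) x y)

/-- the relation `ab‖c`. -/
def relPar (E : V → V → Prop) (a b c : V) : Prop :=
  (ca E a b).Nonempty ∧ ∀ v ∈ mrca E a b,
    (∃ v' ∈ mrca E a c, precLT E v' v) ∧ (∃ v'' ∈ mrca E b c, precLT E v'' v)

/-- the relation `ab|c`. -/
def relBar (E : V → V → Prop) (a b c : V) : Prop :=
  (ca E a b).Nonempty ∧ ∀ v ∈ mrca E a b,
    ∃ v' ∈ mrca E a c ∪ mrca E b c, precLT E v' v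

/-- the relation `ab ⊥ c`. -/
def relPerp (E : V → V → Prop) (a b c : V) : Prop :=
  (ca E a c).Nonempty ∧ (ca E b c).Nonempty ∧
  ∀ v ∈ mrca E a c, ∀ v' ∈ mrca E b c,
    ∃ u ∈ mrca E a b, ∃ u' ∈ mrca E a b, precLT E v u ∧ precLT E v' u'

/-- `C` is an ancestral `X`-cluster. -/
def AncestralCluster (E : V → V → Prop) (X C : Set V) : Prop :=
  C ⊆ X ∧ ∀ x ∈ C, ∀ x' ∈ C, ∀ y ∈ X \ C, relPar E x x' y

/-- `C` is a relaxed ancestral `X`-cluster. -/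
def RelaxedAncestralCluster (E : V → V → Prop) (X C : Set V) : Prop :=
  C ⊆ X ∧ ∀ x ∈ C, ∀ x' ∈ C, ∀ y ∈ X \ C, relBar E x x' y

/-- `C` is a co-ancestral `X`-cluster. -/
def CoAncestralCluster (E : V → V → Prop) (X C : Set V) : Prop :=
  C ⊆ X ∧ ∀ x ∈ C, ∀ x' ∈ C, ∀ y ∈ X \ C, relPerp E x x' y

/-- `C` is an Apresjan `X`-cluster relative to `T`. -/
def ApresjanCluster (E : V → V → Prop) (X : Set V) (T : V → ℝ) (C : Set V) : Prop :=
  C ⊆ X ∧ ∃ t : ℝ,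
    (∀ x ∈ C, ∀ y ∈ C, ∃ v : V, preceq E v x ∧ preceq E v y ∧ t ≤ T v) ∧
    (∀ x ∈ C, ∀ y ∈ X \ C, ∀ v : V, preceq E v x → preceq E v y → T v < t)

/-- `C` is a strong Apresjan `X`-cluster relative to `T`. -/
def StrongApresjanCluster (E : V → V → Prop) (X : Set V) (T : V → ℝ) (C : Set V) : Prop :=
  C ⊆ X ∧ ∃ t : ℝ,
    (∀ x ∈ C, ∀ y ∈ C, ∀ v ∈ mrca E x y, t ≤ T v) ∧
    (∀ x ∈ C, ∀ y ∈ X \ C, ∀ v : V, preceq E v x → preceq E v y → T v < t)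

lemma preceq_antisymm' (E : V → V → Prop) (hacyc : Irreflexive (Relation.TransGen E))
    {u v : V} (h1 : preceq E u v) (h2 : preceq E v u) : u = v := by
  by_contra hne
  rcases (Relation.reflTransGen_iff_eq_or_transGen.mp h1) with rfl | h1'
  · exact hne rfl
  rcases (Relation.reflTransGen_iff_eq_or_transGen.mp h2) with rfl | h2'
  · exact hne rfl
  exact hacyc u (h1'.trans h2')

lemma precLT_trans' (E : V → V → Prop) (hacyc : Irreflexive (Relation.TransGen E))
    {u v w : V} (h1 : precLT E u v) (h2 : precLT E v w) : precLT E u w := by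
  refine ⟨h1.1.trans h2.1, fun h => ?_⟩
  subst h
  exact h2.2 (preceq_antisymm' E hacyc h2.1 h1.1)

lemma precLT_wf (E : V → V → Prop) [Finite V] (hacyc : Irreflexive (Relation.TransGen E)) :
    WellFounded (precLT E) := by
  haveI : IsTrans V (precLT E) := ⟨fun _ _ _ h1 h2 => precLT_trans' E hacyc h1 h2⟩
  haveI : IsIrrefl V (precLT E) := ⟨fun a h => h.2 rfl⟩
  exact Finite.wellFounded_of_trans_of_irrefl _

lemma precLT_flip_wf (E : V → V → Prop) [Finite V]
    (hacyc : Irreflexive (Relation.TransGen E)) :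
    WellFounded (fun u v => precLT E v u) := by
  haveI : IsTrans V (fun u v => precLT E v u) :=
    ⟨fun _ _ _ h1 h2 => precLT_trans' E hacyc h2 h1⟩
  haveI : IsIrrefl V (fun u v : V => precLT E v u) := ⟨fun a h => h.2 rfl⟩
  exact Finite.wellFounded_of_trans_of_irrefl _

lemma exists_mrca (E : V → V → Prop) [Finite V]
    (hacyc : Irreflexive (Relation.TransGen E)) {a b : V}
    (h : (ca E a b).Nonempty) : (mrca E a b).Nonempty := by
  obtain ⟨m, hm, hmin⟩ := (precLT_flip_wf E hacyc).has_min (ca E a b) h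
  refine ⟨m, hm, fun w hw hle => ?_⟩
  by_contra hne
  exact hmin w hw ⟨hle, hne⟩

lemma mrca_comm (E : V → V → Prop) (a b : V) : mrca E a b = mrca E b a := by
  have hca : ca E a b = ca E b a := by
    ext v; exact and_comm
  unfold mrca
  rw [hca]

/-- The set of relaxed ancestral X-clusters of G forms a weak hierarchy. -/
theorem relaxed_ancestral_weak_hierarchy [Fintype V] (E : V → V → Prop) (X : Set V)
    (hacyc : Irreflexive (Relation.TransGen E))
    (A B C : Set V) (hA : RelaxedAncestralCluster E X A)
    (hB : RelaxedAncestralCluster E X B) (hC : RelaxedAncestralCluster E X C) :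
    A ∩ B ∩ C = A ∩ B ∨ A ∩ B ∩ C = B ∩ C ∨ A ∩ B ∩ C = A ∩ C := by
  by_contra hcon
  push_neg at hcon
  obtain ⟨h1, h2, h3⟩ := hcon
  -- extract witnesses
  have hab : ¬ (A ∩ B ⊆ C) := fun h => h1 (Set.inter_eq_left.mpr h)
  have hbc : ¬ (B ∩ C ⊆ A) := by
    intro h
    apply h2
    rw [Set.inter_assoc, Set.inter_eq_right.mpr h]
  have hac : ¬ (A ∩ C ⊆ B) := by
    intro h
    apply h3
    rw [Set.inter_right_comm, Set.inter_eq_left.mpr h]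
  obtain ⟨a, ha, haC⟩ := Set.not_subset.mp hab
  obtain ⟨b, hb, hbA⟩ := Set.not_subset.mp hbc
  obtain ⟨c, hc, hcB⟩ := Set.not_subset.mp hac
  have haX : a ∈ X := hA.1 ha.1
  have hbX : b ∈ X := hB.1 hb.1
  have hcX : c ∈ X := hA.1 hc.1
  -- the three relBar facts
  have rab : relBar E a b c := hB.2 a ha.2 b hb.1 c ⟨hcX, hcB⟩
  have rac : relBar E a c b := hA.2 a ha.1 c hc.1 b ⟨hbX, hbA⟩
  have rbc : relBar E b c a := hC.2 b hb.2 c hc.2 a ⟨haX, haC⟩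
  -- the union of the three mrca sets
  set S : Set V := mrca E a b ∪ mrca E a c ∪ mrca E b c with hS
  have hSne : S.Nonempty := by
    obtain ⟨m, hm⟩ := exists_mrca E hacyc rab.1
    exact ⟨m, Or.inl (Or.inl hm)⟩
  have step : ∀ v ∈ S, ∃ w ∈ S, precLT E w v := by
    intro v hv
    rcases hv with (hv | hv) | hv
    · obtain ⟨w, hw, hlt⟩ := rab.2 v hv
      rcases hw with hw | hw
      · exact ⟨w, Or.inl (Or.inr hw), hlt⟩
      · exact ⟨w, Or.inr hw, hlt⟩
    · obtain ⟨w, hw, hlt⟩ := rac.2 v hv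
      rcases hw with hw | hw
      · exact ⟨w, Or.inl (Or.inl hw), hlt⟩
      · exact ⟨w, Or.inr (by rwa [mrca_comm E b c]), hlt⟩
    · obtain ⟨w, hw, hlt⟩ := rbc.2 v hv
      rcases hw with hw | hw
      · exact ⟨w, Or.inl (Or.inl (by rwa [mrca_comm E a b])), hlt⟩
      · exact ⟨w, Or.inl (Or.inr (by rwa [mrca_comm E a c])), hlt⟩
  obtain ⟨m, hm, hmin⟩ := (precLT_wf E hacyc).has_min S hSne
  obtain ⟨w, hw, hlt⟩ := step m hm
  exact hmin w hw hlt
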